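/- arXiv:1507.08964 — 2 statements merged into one kernel-verified Lean document; each statement's English description precedes it below -/
import Mathlib

section
/- The squashed entanglement of a finite-dimensional bipartite state is bounded above by its entanglement of formation: E_sq(ω_AB) ≤ E_F(ω_AB), where E_sq(ω_AB) = (1/2) inf over all finite-dimensional extensions ω_ABE of I(A:B|E)_ω and E_F(ω_AB) = inf over pure-state ensemble decompositions ω_AB = Σ_i π_i ω^i_AB of Σ_i π_i H(ω^i_A). -/
open scoped BigOperators Kronecker ComplexOrder
open Matrix

noncomputable section

def binEnt (l : ℝ) : ℝ := Real.negMulLog l + Real.negMulLog (1 - l)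

def vN {n : Type*} [Fintype n] [DecidableEq n] (ρ : Matrix n n ℂ) : ℝ :=
  if h : ρ.IsHermitian then ∑ i, Real.negMulLog (h.eigenvalues i) else 0

def IsDensity {n : Type*} [Fintype n] [DecidableEq n] (ρ : Matrix n n ℂ) : Prop :=
  ρ.PosSemidef ∧ ρ.trace = 1

def IsPure {n : Type*} (ρ : Matrix n n ℂ) : Prop :=
  ∃ v : n → ℂ, ρ = Matrix.vecMulVec v (star v)

def ptrB {a b : Type*} [Fintype b] (ρ : Matrix (a × b) (a × b) ℂ) : Matrix a a ℂ :=
  Matrix.of fun i i' => ∑ j, ρ (i, j) (i', j)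

def ptrA {a b : Type*} [Fintype a] (ρ : Matrix (a × b) (a × b) ℂ) : Matrix b b ℂ :=
  Matrix.of fun j j' => ∑ i, ρ (i, j) (i, j')

def mutInfo {a b : Type*} [Fintype a] [Fintype b] [DecidableEq a] [DecidableEq b]
    (ρ : Matrix (a × b) (a × b) ℂ) : ℝ :=
  vN (ptrB ρ) + vN (ptrA ρ) - vN ρ

/- tripartite, index a × b × e -/
def tr3C {a b e : Type*} [Fintype e] (ρ : Matrix (a × b × e) (a × b × e) ℂ) :
    Matrix (a × b) (a × b) ℂ :=
  Matrix.of fun x y => ∑ k, ρ (x.1, x.2, k) (y.1, y.2, k)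

def tr3B {a b e : Type*} [Fintype b] (ρ : Matrix (a × b × e) (a × b × e) ℂ) :
    Matrix (a × e) (a × e) ℂ :=
  Matrix.of fun x y => ∑ j, ρ (x.1, j, x.2) (y.1, j, y.2)

def tr3A {a b e : Type*} [Fintype a] (ρ : Matrix (a × b × e) (a × b × e) ℂ) :
    Matrix (b × e) (b × e) ℂ :=
  Matrix.of fun x y => ∑ i, ρ (i, x.1, x.2) (i, y.1, y.2)

def m3A {a b e : Type*} [Fintype b] [Fintype e] (ρ : Matrix (a × b × e) (a × b × e) ℂ) :
    Matrix a a ℂ :=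
  Matrix.of fun i i' => ∑ j, ∑ k, ρ (i, j, k) (i', j, k)

def m3B {a b e : Type*} [Fintype a] [Fintype e] (ρ : Matrix (a × b × e) (a × b × e) ℂ) :
    Matrix b b ℂ :=
  Matrix.of fun j j' => ∑ i, ∑ k, ρ (i, j, k) (i, j', k)

def m3C {a b e : Type*} [Fintype a] [Fintype b] (ρ : Matrix (a × b × e) (a × b × e) ℂ) :
    Matrix e e ℂ :=
  Matrix.of fun k k' => ∑ i, ∑ j, ρ (i, j, k) (i, j, k')

/-- conditional mutual information I(A:B|E) for a state on a × b × e -/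
def cmi3 {a b e : Type*} [Fintype a] [Fintype b] [Fintype e]
    [DecidableEq a] [DecidableEq b] [DecidableEq e]
    (ρ : Matrix (a × b × e) (a × b × e) ℂ) : ℝ :=
  vN (tr3B ρ) + vN (tr3A ρ) - vN (m3C ρ) - vN ρ

/-- conditional mutual information I(A:B|E) for a state indexed by (a × b) × k -/
def cmiP {a b k : Type*} [Fintype a] [Fintype b] [Fintype k]
    [DecidableEq a] [DecidableEq b] [DecidableEq k]
    (ω : Matrix ((a × b) × k) ((a × b) × k) ℂ) : ℝ :=
  vN (Matrix.of fun (x y : a × k) => ∑ j, ω ((x.1, j), x.2) ((y.1, j), y.2)) +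
  vN (Matrix.of fun (x y : b × k) => ∑ i, ω ((i, x.1), x.2) ((i, y.1), y.2)) -
  vN (ptrA ω) - vN ω

/-! Flag a pure-state ensemble `ω = ∑ₖ πₖ ψₖ` with a classical register: the block-diagonal
state `Ω = ⊕ₖ πₖ ψₖ` extends `ω`. Conditioning on a classical register averages the mutual
information, `I(A:B|E)_Ω = ∑ₖ πₖ I(A:B)_{ψₖ}` (the entropy of the weights cancels), and for a pure
state `I(A:B)_ψ = 2 H(ψ_A)`, because `ψ_A = M Mᴴ` and `ψ_B = (Mᴴ M)ᵀ` have the same nonzero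
spectrum while `H(ψ) = 0`. Hence twice the squashed entanglement is at most twice the average
entanglement of every pure-state ensemble. Entropies are read off the roots of the characteristic
polynomial, so their invariance under unitary conjugation, transposition and `AB ↦ BA` comes from
the corresponding identities of characteristic polynomials. -/

open Polynomial

theorem isHermitian_diagonal_ofReal {n : Type*} [DecidableEq n] (d : n → ℝ) :
    (diagonal fun i => (d i : ℂ)).IsHermitian := by
  simp [IsHermitian, diagonal_conjTranspose, Pi.star_def]

section VonNeumannEntropy

variable {n m : Type*} [Fintype n] [DecidableEq n] [Fintype m] [DecidableEq m]

theorem vN_eq_sum_roots_charpoly {ρ : Matrix n n ℂ} (hρ : ρ.IsHermitian) :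
    vN ρ = (ρ.charpoly.roots.map fun z => Real.negMulLog z.re).sum := by
  rw [vN, dif_pos hρ, hρ.roots_charpoly_eq_eigenvalues, Multiset.map_map]
  rfl

theorem vN_eq_of_charpoly_eq {A B : Matrix n n ℂ} (hA : A.IsHermitian) (hB : B.IsHermitian)
    (h : A.charpoly = B.charpoly) : vN A = vN B := by
  rw [vN_eq_sum_roots_charpoly hA, vN_eq_sum_roots_charpoly hB, h]

theorem vN_diagonal (d : n → ℝ) :
    vN (diagonal fun i => (d i : ℂ)) = ∑ i, Real.negMulLog (d i) := by
  rw [vN_eq_sum_roots_charpoly (isHermitian_diagonal_ofReal d), charpoly_diagonal,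
    roots_prod _ _ (Finset.prod_ne_zero_iff.mpr fun i _ => X_sub_C_ne_zero _)]
  simp

theorem vN_unitary_conj {U : Matrix n n ℂ} (hU : U ∈ unitaryGroup n ℂ) {A : Matrix n n ℂ}
    (hA : A.IsHermitian) : vN (U * A * star U) = vN A := by
  refine vN_eq_of_charpoly_eq ?_ hA ?_
  · simpa [star_eq_conjTranspose] using isHermitian_mul_mul_conjTranspose U hA
  · rw [charpoly_mul_comm, ← mul_assoc, mem_unitaryGroup_iff'.mp hU, one_mul]

theorem vN_transpose {ρ : Matrix n n ℂ} (hρ : ρ.IsHermitian) : vN ρᵀ = vN ρ :=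
  vN_eq_of_charpoly_eq hρ.transpose hρ (charpoly_transpose ρ)

theorem vN_mul_comm (A : Matrix n m ℂ) (B : Matrix m n ℂ) (hAB : (A * B).IsHermitian)
    (hBA : (B * A).IsHermitian) : vN (A * B) = vN (B * A) := by
  have hroots := congrArg roots (charpoly_mul_comm' A B)
  simp only [roots_mul (mul_ne_zero (pow_ne_zero _ X_ne_zero) (charpoly_monic _).ne_zero),
    roots_pow, roots_X] at hroots
  have hsum := congrArg (fun s => (s.map fun z : ℂ => Real.negMulLog z.re).sum) hroots
  simp only [Multiset.map_add, Multiset.sum_add, Multiset.map_nsmul, Multiset.sum_nsmul,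
    Multiset.map_singleton, Multiset.sum_singleton, Complex.zero_re, Real.negMulLog_zero,
    smul_zero, zero_add] at hsum
  rw [vN_eq_sum_roots_charpoly hAB, vN_eq_sum_roots_charpoly hBA, hsum]

theorem sum_eigenvalues_eq_one {ρ : Matrix n n ℂ} (hρ : ρ.IsHermitian) (htr : ρ.trace = 1) :
    ∑ i, hρ.eigenvalues i = 1 := by
  rw [hρ.trace_eq_sum_eigenvalues] at htr
  exact_mod_cast (by simpa using htr : ∑ i, (hρ.eigenvalues i : ℂ) = 1)

theorem vN_real_smul {ρ : Matrix n n ℂ} (hρ : ρ.IsHermitian) (htr : ρ.trace = 1) (c : ℝ) :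
    vN ((c : ℂ) • ρ) = c * vN ρ + Real.negMulLog c := by
  have hspec : (c : ℂ) • ρ = hρ.eigenvectorUnitary *
      diagonal (fun i => ((c * hρ.eigenvalues i : ℝ) : ℂ)) *
        star (hρ.eigenvectorUnitary : Matrix n n ℂ) := by
    conv_lhs => rw [hρ.spectral_theorem, Unitary.conjStarAlgAut_apply]
    rw [← smul_mul_assoc, ← mul_smul_comm, ← diagonal_smul]
    congr 3 with i
    simp
  rw [hspec, vN_unitary_conj hρ.eigenvectorUnitary.2 (isHermitian_diagonal_ofReal _), vN_diagonal]
  simp only [Real.negMulLog_mul, Finset.sum_add_distrib, ← Finset.sum_mul, ← Finset.mul_sum,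
    sum_eigenvalues_eq_one hρ htr, vN, dif_pos hρ]
  ring

theorem vN_blockDiagonal (M : m → Matrix n n ℂ) (hM : ∀ k, (M k).IsHermitian) :
    vN (blockDiagonal M) = ∑ k, vN (M k) := by
  set U : m → Matrix n n ℂ := fun k => ↑(hM k).eigenvectorUnitary
  have hU : blockDiagonal U ∈ unitaryGroup (n × m) ℂ := by
    have hUk : (fun k => U k * (U k)ᴴ) = 1 := funext fun k =>
      mem_unitaryGroup_iff.mp (hM k).eigenvectorUnitary.2
    rw [mem_unitaryGroup_iff, star_eq_conjTranspose, blockDiagonal_conjTranspose,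
      ← blockDiagonal_mul, hUk, blockDiagonal_one]
  have hspec : blockDiagonal M = blockDiagonal U *
      diagonal (fun ik => ((hM ik.2).eigenvalues ik.1 : ℂ)) * star (blockDiagonal U) := by
    rw [star_eq_conjTranspose, blockDiagonal_conjTranspose,
      ← blockDiagonal_diagonal fun k i => ((hM k).eigenvalues i : ℂ), ← blockDiagonal_mul,
      ← blockDiagonal_mul]
    congr 1 with k : 1
    exact (hM k).spectral_theorem
  rw [hspec, vN_unitary_conj hU (isHermitian_diagonal_ofReal _), vN_diagonal,
    Fintype.sum_prod_type_right]
  simp [vN, hM]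

theorem vN_nonneg {ρ : Matrix n n ℂ} (hρ : ρ.PosSemidef) (htr : ρ.trace = 1) : 0 ≤ vN ρ := by
  rw [vN, dif_pos hρ.1]
  refine Finset.sum_nonneg fun i _ => Real.negMulLog_nonneg (hρ.eigenvalues_nonneg i) ?_
  calc hρ.1.eigenvalues i ≤ ∑ j, hρ.1.eigenvalues j :=
        Finset.single_le_sum (fun j _ => hρ.eigenvalues_nonneg j) (Finset.mem_univ i)
    _ = 1 := sum_eigenvalues_eq_one hρ.1 htr

theorem vN_eq_zero_of_isPure {ρ : Matrix n n ℂ} (hρ : IsDensity ρ) (hpure : IsPure ρ) :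
    vN ρ = 0 := by
  obtain ⟨v, rfl⟩ := hpure
  have hnorm :
      replicateRow Unit (star v) * replicateCol Unit v = diagonal fun _ => ((1 : ℝ) : ℂ) := by
    have htr := hρ.2
    rw [trace_vecMulVec, dotProduct_comm] at htr
    ext
    simpa [mul_apply, dotProduct] using htr
  have hherm := hρ.1.1
  rw [vecMulVec_eq Unit] at hherm ⊢
  rw [vN_mul_comm _ _ hherm (hnorm ▸ isHermitian_diagonal_ofReal _), hnorm, vN_diagonal]
  simp

end VonNeumannEntropy

section PartialTrace

variable {a b : Type*}

theorem ptrB_smul [Fintype b] (c : ℂ) (ρ : Matrix (a × b) (a × b) ℂ) :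
    ptrB (c • ρ) = c • ptrB ρ := by
  ext
  simp [ptrB, Finset.mul_sum]

theorem ptrA_smul [Fintype a] (c : ℂ) (ρ : Matrix (a × b) (a × b) ℂ) :
    ptrA (c • ρ) = c • ptrA ρ := by
  ext
  simp [ptrA, Finset.mul_sum]

theorem trace_ptrB [Fintype a] [Fintype b] (ρ : Matrix (a × b) (a × b) ℂ) :
    (ptrB ρ).trace = ρ.trace := by
  simp [trace, ptrB, Fintype.sum_prod_type]

theorem trace_ptrA [Fintype a] [Fintype b] (ρ : Matrix (a × b) (a × b) ℂ) :
    (ptrA ρ).trace = ρ.trace := by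
  simp [trace, ptrA, Fintype.sum_prod_type_right]

theorem Matrix.IsHermitian.ptrB [Fintype b] {ρ : Matrix (a × b) (a × b) ℂ}
    (hρ : ρ.IsHermitian) :
    (ptrB ρ).IsHermitian := by
  ext i i'
  simp only [conjTranspose_apply, _root_.ptrB, of_apply, star_sum]
  exact Finset.sum_congr rfl fun j _ => hρ.apply (i, j) (i', j)

theorem Matrix.IsHermitian.ptrA [Fintype a] {ρ : Matrix (a × b) (a × b) ℂ}
    (hρ : ρ.IsHermitian) :
    (ptrA ρ).IsHermitian := by
  ext j j'
  simp only [conjTranspose_apply, _root_.ptrA, of_apply, star_sum]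
  exact Finset.sum_congr rfl fun i _ => hρ.apply (i, j) (i, j')

theorem ptrB_vecMulVec_star [Fintype b] (v : a × b → ℂ) :
    ptrB (vecMulVec v (star v)) = of (Function.curry v) * (of (Function.curry v))ᴴ := by
  ext
  simp [ptrB, vecMulVec_apply, mul_apply]

theorem ptrA_vecMulVec_star [Fintype a] (v : a × b → ℂ) :
    ptrA (vecMulVec v (star v)) = ((of (Function.curry v))ᴴ * of (Function.curry v))ᵀ := by
  ext
  simp [ptrA, vecMulVec_apply, mul_apply, mul_comm]

theorem posSemidef_ptrB_of_isPure [Fintype a] [Fintype b] {ρ : Matrix (a × b) (a × b) ℂ}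
    (hpure : IsPure ρ) : (ptrB ρ).PosSemidef := by
  obtain ⟨v, rfl⟩ := hpure
  rw [ptrB_vecMulVec_star]
  exact posSemidef_self_mul_conjTranspose _

end PartialTrace

section MutualInformation

variable {a b : Type*} [Fintype a] [Fintype b] [DecidableEq a] [DecidableEq b]

theorem vN_ptrA_eq_vN_ptrB_of_isPure {ρ : Matrix (a × b) (a × b) ℂ} (hpure : IsPure ρ) :
    vN (ptrA ρ) = vN (ptrB ρ) := by
  obtain ⟨v, rfl⟩ := hpure
  rw [ptrA_vecMulVec_star, ptrB_vecMulVec_star,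
    vN_transpose (isHermitian_conjTranspose_mul_self _),
    vN_mul_comm _ _ (isHermitian_conjTranspose_mul_self _) (isHermitian_mul_conjTranspose_self _)]

theorem mutInfo_of_isPure {ρ : Matrix (a × b) (a × b) ℂ} (hρ : IsDensity ρ) (hpure : IsPure ρ) :
    mutInfo ρ = 2 * vN (ptrB ρ) := by
  rw [mutInfo, vN_ptrA_eq_vN_ptrB_of_isPure hpure, vN_eq_zero_of_isPure hρ hpure]
  ring

theorem mutInfo_real_smul {ρ : Matrix (a × b) (a × b) ℂ} (hρ : ρ.IsHermitian) (htr : ρ.trace = 1)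
    (c : ℝ) : mutInfo ((c : ℂ) • ρ) = c * mutInfo ρ + Real.negMulLog c := by
  rw [mutInfo, mutInfo, ptrB_smul, ptrA_smul, vN_real_smul hρ htr,
    vN_real_smul hρ.ptrB ((trace_ptrB ρ).trans htr),
    vN_real_smul hρ.ptrA ((trace_ptrA ρ).trans htr)]
  ring

end MutualInformation

section ClassicalFlag

variable {a b ι : Type*} [DecidableEq ι]

theorem ptrB_blockDiagonal [Fintype ι] (M : ι → Matrix (a × b) (a × b) ℂ) :
    ptrB (blockDiagonal M) = ∑ k, M k := by
  ext
  simp [ptrB, Matrix.sum_apply]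

theorem ptrA_blockDiagonal [Fintype a] [Fintype b] (M : ι → Matrix (a × b) (a × b) ℂ) :
    ptrA (blockDiagonal M) = diagonal fun k => (M k).trace := by
  ext k k'
  by_cases h : k = k' <;> simp [ptrA, blockDiagonal_apply, trace, h]

theorem cmiP_blockDiagonal [Fintype a] [Fintype b] [Fintype ι] [DecidableEq a] [DecidableEq b]
    (M : ι → Matrix (a × b) (a × b) ℂ) (hM : ∀ k, (M k).IsHermitian) :
    cmiP (blockDiagonal M) = ∑ k, mutInfo (M k) - vN (diagonal fun k => (M k).trace) := by
  have hAE : (of fun (x y : a × ι) => ∑ j, blockDiagonal M ((x.1, j), x.2) ((y.1, j), y.2)) =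
      blockDiagonal fun k => ptrB (M k) := by
    ext ⟨i, k⟩ ⟨i', k'⟩
    by_cases h : k = k' <;> simp [blockDiagonal_apply, ptrB, h]
  have hBE : (of fun (x y : b × ι) => ∑ i, blockDiagonal M ((i, x.1), x.2) ((i, y.1), y.2)) =
      blockDiagonal fun k => ptrA (M k) := by
    ext ⟨j, k⟩ ⟨j', k'⟩
    by_cases h : k = k' <;> simp [blockDiagonal_apply, ptrA, h]
  rw [cmiP, hAE, hBE, ptrA_blockDiagonal, vN_blockDiagonal _ fun k => (hM k).ptrB,
    vN_blockDiagonal _ fun k => (hM k).ptrA, vN_blockDiagonal _ hM]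
  simp only [mutInfo, Finset.sum_sub_distrib, Finset.sum_add_distrib]
  ring

theorem posSemidef_blockDiagonal {n : Type*} [Fintype n] [Fintype ι] (M : ι → Matrix n n ℂ)
    (hM : ∀ k, (M k).PosSemidef) : (blockDiagonal M).PosSemidef := by
  refine .of_dotProduct_mulVec_nonneg (isHermitian_blockDiagonal_iff.mpr fun k => (hM k).1)
    fun x => ?_
  have hsplit : star x ⬝ᵥ (blockDiagonal M *ᵥ x) =
      ∑ k, star (fun i => x (i, k)) ⬝ᵥ (M k *ᵥ fun i => x (i, k)) := by
    simp only [dotProduct, mulVec, Fintype.sum_prod_type_right, Pi.star_apply, blockDiagonal_apply,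
      ite_mul, zero_mul, Finset.sum_ite_irrel, Finset.sum_const_zero, Finset.sum_ite_eq,
      Finset.mem_univ, if_true]
  rw [hsplit]
  exact Finset.sum_nonneg fun k _ => (hM k).dotProduct_mulVec_nonneg _

variable [Fintype ι] [Fintype a] [Fintype b] [DecidableEq a] [DecidableEq b]

theorem isDensity_blockDiagonal_ensemble {π : ι → ℝ} (hπ0 : ∀ k, 0 ≤ π k) (hπ1 : ∑ k, π k = 1)
    {ψ : ι → Matrix (a × b) (a × b) ℂ} (hψ : ∀ k, IsDensity (ψ k)) :
    IsDensity (blockDiagonal fun k => (π k : ℂ) • ψ k) := by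
  refine ⟨posSemidef_blockDiagonal _ fun k => (hψ k).1.smul (by exact_mod_cast hπ0 k), ?_⟩
  simp only [trace_blockDiagonal, trace_smul, (hψ _).2, smul_eq_mul, mul_one]
  exact_mod_cast hπ1

theorem cmiP_blockDiagonal_pure_ensemble (π : ι → ℝ) {ψ : ι → Matrix (a × b) (a × b) ℂ}
    (hψ : ∀ k, IsDensity (ψ k) ∧ IsPure (ψ k)) :
    cmiP (blockDiagonal fun k => (π k : ℂ) • ψ k) = 2 * ∑ k, π k * vN (ptrB (ψ k)) := by
  have htraces : (fun k => ((π k : ℂ) • ψ k).trace) = fun k => (π k : ℂ) := by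
    simp [(hψ _).1.2]
  rw [cmiP_blockDiagonal _ fun k => (hψ k).1.1.1.smul (Complex.conj_ofReal (π k)), htraces,
    vN_diagonal]
  simp only [mutInfo_real_smul (hψ _).1.1.1 (hψ _).1.2, mutInfo_of_isPure (hψ _).1 (hψ _).2,
    Finset.sum_add_distrib, add_sub_cancel_right, Finset.mul_sum, mul_left_comm (2 : ℝ)]

end ClassicalFlag

section PureEnsemble

variable {n : Type*} [Fintype n] [DecidableEq n]

theorem Matrix.IsHermitian.eq_sum_eigenvalues_smul_vecMulVec {A : Matrix n n ℂ}
    (hA : A.IsHermitian) :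
    A = ∑ i, (hA.eigenvalues i : ℂ) •
      vecMulVec (hA.eigenvectorBasis i) (star (hA.eigenvectorBasis i : n → ℂ)) := by
  conv_lhs => rw [hA.spectral_theorem, Unitary.conjStarAlgAut_apply]
  ext p q
  rw [mul_apply, Matrix.sum_apply]
  refine Finset.sum_congr rfl fun i _ => ?_
  simp only [mul_diagonal, smul_apply, vecMulVec_apply, star_apply, Pi.star_apply,
    Function.comp_apply, smul_eq_mul, IsHermitian.eigenvectorUnitary_apply,
    RCLike.ofReal_eq_complex_ofReal]
  ring

theorem isDensity_vecMulVec_eigenvectorBasis {A : Matrix n n ℂ} (hA : A.IsHermitian) (i : n) :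
    IsDensity (vecMulVec (hA.eigenvectorBasis i) (star (hA.eigenvectorBasis i : n → ℂ))) := by
  refine ⟨posSemidef_vecMulVec_self_star _, ?_⟩
  rw [trace_vecMulVec, ← EuclideanSpace.inner_eq_star_dotProduct, inner_self_eq_norm_sq_to_K,
    hA.eigenvectorBasis.orthonormal.1 i]
  simp

theorem exists_pure_ensemble {ρ : Matrix n n ℂ} (hρ : IsDensity ρ) :
    ∃ (m : ℕ) (π : Fin m → ℝ) (ψ : Fin m → Matrix n n ℂ),
      (∀ i, 0 ≤ π i) ∧ (∑ i, π i = 1) ∧ (∀ i, IsDensity (ψ i) ∧ IsPure (ψ i)) ∧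
      ρ = ∑ i, (π i : ℂ) • ψ i := by
  have hherm := hρ.1.1
  let e := (Fintype.equivFin n).symm
  refine ⟨Fintype.card n, fun i => hherm.eigenvalues (e i),
    fun i => vecMulVec (hherm.eigenvectorBasis (e i)) (star (hherm.eigenvectorBasis (e i) : n → ℂ)),
    fun i => hρ.1.eigenvalues_nonneg _, ?_,
    fun i => ⟨isDensity_vecMulVec_eigenvectorBasis _ _, _, rfl⟩, ?_⟩
  · rw [e.sum_comp hherm.eigenvalues, sum_eigenvalues_eq_one hherm hρ.2]
  · conv_lhs => rw [hherm.eq_sum_eigenvalues_smul_vecMulVec]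
    exact (e.sum_comp _).symm

end PureEnsemble

theorem Real.sInf_le_of_mem_of_nonneg {S : Set ℝ} {x : ℝ} (hx : x ∈ S) (hx0 : 0 ≤ x) :
    sInf S ≤ x := by
  by_cases hS : BddBelow S
  · exact csInf_le hS hx
  · rwa [Real.sInf_of_not_bddBelow hS]

theorem stmt14 {a b : Type*} [Fintype a] [Fintype b] [DecidableEq a] [DecidableEq b]
    (ω : Matrix (a × b) (a × b) ℂ) (hω : IsDensity ω) :
    (1 / 2) * sInf {x : ℝ | ∃ (k : ℕ) (Ω : Matrix ((a × b) × Fin k) ((a × b) × Fin k) ℂ),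
        IsDensity Ω ∧ ptrB Ω = ω ∧ x = cmiP Ω} ≤
      sInf {x : ℝ | ∃ (m : ℕ) (π : Fin m → ℝ) (ωi : Fin m → Matrix (a × b) (a × b) ℂ),
        (∀ i, 0 ≤ π i) ∧ (∑ i, π i = 1) ∧ (∀ i, IsDensity (ωi i) ∧ IsPure (ωi i)) ∧
        ω = ∑ i, ((π i : ℂ)) • ωi i ∧ x = ∑ i, π i * vN (ptrB (ωi i))} := by
  obtain ⟨m, π, ψ, hπ0, hπ1, hψ, hω_eq⟩ := exists_pure_ensemble hω
  refine le_csInf ⟨_, m, π, ψ, hπ0, hπ1, hψ, hω_eq, rfl⟩ ?_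
  rintro _ ⟨m, π, ψ, hπ0, hπ1, hψ, rfl, rfl⟩
  have hEF_nonneg : 0 ≤ ∑ k, π k * vN (ptrB (ψ k)) :=
    Finset.sum_nonneg fun k _ => mul_nonneg (hπ0 k)
      (vN_nonneg (posSemidef_ptrB_of_isPure (hψ k).2) ((trace_ptrB _).trans (hψ k).1.2))
  calc 1 / 2 * sInf _ ≤ 1 / 2 * (2 * ∑ k, π k * vN (ptrB (ψ k))) := by
        gcongr
        exact Real.sInf_le_of_mem_of_nonneg
          ⟨m, _, isDensity_blockDiagonal_ensemble hπ0 hπ1 fun k => (hψ k).1,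
            ptrB_blockDiagonal _, (cmiP_blockDiagonal_pure_ensemble π hψ).symm⟩
          (mul_nonneg zero_le_two hEF_nonneg)
    _ = ∑ k, π k * vN (ptrB (ψ k)) := by ring

end
end

section
/- Let H_A be a positive self-adjoint operator with Tr e^{−βH_A} < ∞ for all β > 0 and lowest eigenvalue 0, and for E > 0 let γ(E) denote the Gibbs state at mean energy E (maximizing the entropy among states with Tr H_A ρ ≤ E). Then δ · H(γ(E/δ)) → 0 as δ → 0⁺. -/
open scoped BigOperators Kronecker ComplexOrder
open Matrix

noncomputable section

/-!
Write `Z b = ∑ exp (-b E n)` and `γ_b = exp (-b E) / Z b`. By Gibbs' inequality, a probability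
distribution `p` of mean energy `e` has entropy at most `b₀ e + log Z b₀` for every `b₀ > 0`.
For `γ(En/δ)` this gives `0 ≤ δ H(γ(En/δ)) ≤ b₀ En + δ log Z b₀`, whose `limsup` as `δ → 0⁺` is
at most `b₀ En`; letting `b₀ → 0⁺` proves the claim.
-/

open Real Filter Topology

lemma Real.negMulLog_le_neg_mul_log_add_sub {p q : ℝ} (hp : 0 ≤ p) (hq : 0 < q) :
    negMulLog p ≤ -(p * log q) + (q - p) := by
  have hle := negMulLog_le_one_sub_self (div_nonneg hp hq.le)
  calc negMulLog p = negMulLog (q * (p / q)) := by rw [mul_div_cancel₀ _ hq.ne']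
    _ = -(p * log q) + q * negMulLog (p / q) := by
      rw [negMulLog_mul, negMulLog]
      field_simp
    _ ≤ -(p * log q) + q * (1 - p / q) := by gcongr
    _ = -(p * log q) + (q - p) := by field_simp

section Gibbs

variable {ι : Type*}

lemma negMulLog_nonneg_of_hasSum_one {p : ι → ℝ} (hp : ∀ i, 0 ≤ p i) (hp1 : HasSum p 1) (i : ι) :
    0 ≤ negMulLog (p i) :=
  negMulLog_nonneg (hp i) (le_hasSum hp1 i fun j _ => hp j)

/-- Gibbs' inequality. -/
theorem tsum_negMulLog_le_of_hasSum {p q : ι → ℝ} {s c : ℝ} (hp : ∀ i, 0 ≤ p i)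
    (hp1 : HasSum p 1) (hq : ∀ i, 0 < q i) (hqs : HasSum q s) (hs : s ≤ 1)
    (hpq : HasSum (fun i => p i * log (q i)) c) :
    ∑' i, negMulLog (p i) ≤ -c := by
  have hbound i := negMulLog_le_neg_mul_log_add_sub (hp i) (hq i)
  have hsum := hpq.neg.add (hqs.sub hp1)
  have hH : Summable fun i => negMulLog (p i) :=
    .of_nonneg_of_le (fun i => negMulLog_nonneg_of_hasSum_one hp hp1 i) hbound hsum.summable
  have := hH.tsum_le_tsum hbound hsum.summable
  rw [hsum.tsum_eq] at this
  linarith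

def gibbs (E : ι → ℝ) (b : ℝ) (i : ι) : ℝ := exp (-b * E i) / ∑' k, exp (-b * E k)

variable [Nonempty ι] {E : ι → ℝ} {b : ℝ}

lemma tsum_exp_neg_mul_pos (hZ : Summable fun i => exp (-b * E i)) :
    0 < ∑' i, exp (-b * E i) :=
  hZ.tsum_pos (fun _ => (exp_pos _).le) (Classical.arbitrary ι) (exp_pos _)

lemma gibbs_pos (hZ : Summable fun i => exp (-b * E i)) (i : ι) : 0 < gibbs E b i :=
  div_pos (exp_pos _) (tsum_exp_neg_mul_pos hZ)

lemma hasSum_gibbs (hZ : Summable fun i => exp (-b * E i)) : HasSum (gibbs E b) 1 := by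
  have := hZ.hasSum.div_const (∑' k, exp (-b * E k))
  rwa [div_self (tsum_exp_neg_mul_pos hZ).ne'] at this

lemma log_gibbs (hZ : Summable fun i => exp (-b * E i)) (i : ι) :
    log (gibbs E b i) = -b * E i - log (∑' k, exp (-b * E k)) := by
  rw [gibbs, log_div (exp_ne_zero _) (tsum_exp_neg_mul_pos hZ).ne', log_exp]

theorem tsum_negMulLog_le_mul_add_log_tsum_exp {p : ι → ℝ} {e : ℝ} (hp : ∀ i, 0 ≤ p i)
    (hp1 : HasSum p 1) (hpE : HasSum (fun i => p i * E i) e)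
    (hZ : Summable fun i => exp (-b * E i)) :
    ∑' i, negMulLog (p i) ≤ b * e + log (∑' i, exp (-b * E i)) := by
  have hpq : HasSum (fun i => p i * log (gibbs E b i))
      (-b * e - log (∑' k, exp (-b * E k)) * 1) := by
    refine ((hpE.mul_left (-b)).sub (hp1.mul_left (log (∑' k, exp (-b * E k))))).congr_fun
      fun i => ?_
    rw [log_gibbs hZ]
    ring
  linarith [tsum_negMulLog_le_of_hasSum hp hp1 (gibbs_pos hZ) (hasSum_gibbs hZ) le_rfl hpq]

lemma hasSum_gibbs_mul {e : ℝ} (hZ : Summable fun i => exp (-b * E i)) (he : e ≠ 0)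
    (hβ : ∑' i, E i * exp (-b * E i) = e * ∑' i, exp (-b * E i)) :
    HasSum (fun i => gibbs E b i * E i) e := by
  have hZpos := tsum_exp_neg_mul_pos hZ
  -- otherwise the left side of `hβ` would be the junk value `0`
  have hsum : Summable fun i => E i * exp (-b * E i) := by
    by_contra h
    rw [tsum_eq_zero_of_not_summable h] at hβ
    exact mul_ne_zero he hZpos.ne' hβ.symm
  have := (hsum.hasSum.div_const (∑' i, exp (-b * E i)))
  rw [hβ, mul_div_cancel_right₀ _ hZpos.ne'] at this
  refine this.congr_fun fun i => ?_
  rw [gibbs]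
  ring

end Gibbs

lemma tendsto_nhdsGT_zero_of_nonneg_of_le {f L : ℝ → ℝ} {c : ℝ} (hf0 : ∀ δ > 0, 0 ≤ f δ)
    (hf : ∀ b > 0, ∀ δ > 0, f δ ≤ b * c + δ * L b) : Tendsto f (𝓝[>] 0) (𝓝 0) := by
  refine tendsto_order.2 ⟨fun a ha => ?_, fun a ha => ?_⟩
  · filter_upwards [self_mem_nhdsWithin] with δ hδ using ha.trans_le (hf0 δ hδ)
  · have hbc : Tendsto (fun b => b * c) (𝓝[>] 0) (𝓝 0) := by
      simpa using tendsto_nhdsWithin_of_tendsto_nhds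
        ((continuous_id.mul_const c).tendsto' (0 : ℝ) 0 (zero_mul c))
    obtain ⟨b, hba, hb⟩ := ((hbc.eventually (gt_mem_nhds ha)).and self_mem_nhdsWithin).exists
    have hδ : Tendsto (fun δ => b * c + δ * L b) (𝓝[>] 0) (𝓝 (b * c)) := by
      have := ((continuous_id.mul_const (L b)).const_add (b * c)).tendsto (0 : ℝ)
      simpa using tendsto_nhdsWithin_of_tendsto_nhds this
    filter_upwards [hδ.eventually (gt_mem_nhds hba), self_mem_nhdsWithin] with δ hδa hδpos
    exact (hf b hb δ hδpos).trans_lt hδa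

theorem stmt16_general (E : ℕ → ℝ)
    (hZ : ∀ β > 0, Summable fun n => Real.exp (-β * E n))
    (β : ℝ → ℝ) (hβpos : ∀ e > 0, 0 < β e)
    (hβ : ∀ e > 0, (∑' n, E n * Real.exp (-β e * E n)) = e * ∑' n, Real.exp (-β e * E n))
    (En : ℝ) (hEn : 0 < En) :
    Filter.Tendsto
      (fun δ : ℝ => δ * ∑' n, Real.negMulLog
        (Real.exp (-β (En / δ) * E n) / ∑' k, Real.exp (-β (En / δ) * E k)))
      (nhdsWithin 0 (Set.Ioi 0)) (nhds 0) := by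
  have hZβ {δ : ℝ} (hδ : 0 < δ) : Summable fun n => exp (-β (En / δ) * E n) :=
    hZ _ (hβpos _ (div_pos hEn hδ))
  refine tendsto_nhdsGT_zero_of_nonneg_of_le (c := En) (L := fun b => log (∑' n, exp (-b * E n)))
    (fun δ hδ => mul_nonneg hδ.le (tsum_nonneg
      (negMulLog_nonneg_of_hasSum_one (fun n => (gibbs_pos (hZβ hδ) n).le) (hasSum_gibbs (hZβ hδ)))))
    fun b₀ hb₀ δ hδ => ?_
  have he : 0 < En / δ := div_pos hEn hδ
  have hH := tsum_negMulLog_le_mul_add_log_tsum_exp (fun n => (gibbs_pos (hZβ hδ) n).le)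
    (hasSum_gibbs (hZβ hδ)) (hasSum_gibbs_mul (hZβ hδ) he.ne' (hβ _ he)) (hZ b₀ hb₀)
  calc δ * ∑' n, negMulLog (gibbs E (β (En / δ)) n)
      ≤ δ * (b₀ * (En / δ) + log (∑' n, exp (-b₀ * E n))) := by gcongr
    _ = b₀ * En + δ * log (∑' n, exp (-b₀ * E n)) := by field_simp

theorem stmt16 (E : ℕ → ℝ) (hE0 : E 0 = 0) (hEnn : ∀ n, 0 ≤ E n)
    (hZ : ∀ β > 0, Summable fun n => Real.exp (-β * E n))
    (β : ℝ → ℝ) (hβpos : ∀ e > 0, 0 < β e)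
    (hβ : ∀ e > 0, (∑' n, E n * Real.exp (-β e * E n)) = e * ∑' n, Real.exp (-β e * E n))
    (En : ℝ) (hEn : 0 < En) :
    Filter.Tendsto
      (fun δ : ℝ => δ * ∑' n, Real.negMulLog
        (Real.exp (-β (En / δ) * E n) / ∑' k, Real.exp (-β (En / δ) * E k)))
      (nhdsWithin 0 (Set.Ioi 0)) (nhds 0) :=
  stmt16_general E hZ β hβpos hβ En hEn

end
end
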